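/- A labeled plane tree T has no improper edges if and only if T is an increasing plane tree (i.e., the vertex labels increase along every path from the root). -/

import Mathlib

/-- A plane tree with labeled vertices: a root label together with an ordered
list of child subtrees.  (A plane tree is a rooted tree in which the children
of each node are linearly ordered.) -/
inductive LTree : Type where
  | node : ℕ → List LTree → LTree

namespace LTree

/-- The label of the root. -/
def rootLabel : LTree → ℕ
  | node a _ => a

/-- The list of child subtrees of the root. -/
def children : LTree → List LTree
  | node _ cs => cs

/-- `deg_T(root)`: the number of children of the root. -/
def rootDeg (t : LTree) : ℕ := (children t).length

mutual
  /-- The list of all vertex labels of a tree. -/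
  def labels : LTree → List ℕ
    | node a cs => a :: labelsList cs
  /-- The list of all vertex labels of a forest. -/
  def labelsList : List LTree → List ℕ
    | [] => []
    | c :: rest => labels c ++ labelsList rest
end

/-- `β(v)`: the smallest label occurring in the subtree `t` rooted at `v`. -/
def minLabel (t : LTree) : ℕ := (labels t).foldr min (rootLabel t)

/-- `min { j, β(c₁), …, β(cₖ) }` for a vertex `j` and a list of subtrees `c₁, …, cₖ`. -/
def minOver (j : ℕ) (rest : List LTree) : ℕ := (rest.map minLabel).foldr min j

mutual
  /-- The list of edges of a tree, each recorded as a (parent label, child label)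
  pair, in depth-first order. -/
  def edgeList : LTree → List (ℕ × ℕ)
    | node a cs => edgeListAux a cs
  def edgeListAux : ℕ → List LTree → List (ℕ × ℕ)
    | _, [] => []
    | a, c :: rest => (a, rootLabel c) :: (edgeList c ++ edgeListAux a rest)
end

mutual
  /-- The list of improper edges of a tree: if a vertex `j` has children
  `j₁, …, jₖ` (ordered left to right), the edge `(j, jᵢ)` is improper when
  `β(jᵢ) < min { j, β(j_{i+1}), …, β(jₖ) }`. -/
  def improperEdges : LTree → List (ℕ × ℕ)
    | node a cs => improperEdgesAux a cs
  def improperEdgesAux : ℕ → List LTree → List (ℕ × ℕ)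
    | _, [] => []
    | j, c :: rest =>
        (if minLabel c < minOver j rest then [(j, rootLabel c)] else [])
          ++ improperEdges c ++ improperEdgesAux j rest
end

mutual
  /-- The list of proper (i.e. non-improper) edges of a tree. -/
  def properEdges : LTree → List (ℕ × ℕ)
    | node a cs => properEdgesAux a cs
  def properEdgesAux : ℕ → List LTree → List (ℕ × ℕ)
    | _, [] => []
    | j, c :: rest =>
        (if minLabel c < minOver j rest then [] else [(j, rootLabel c)])
          ++ properEdges c ++ properEdgesAux j rest
end

/-- `impr T`: the number of improper edges of `T`. -/
def impr (t : LTree) : ℕ := (improperEdges t).length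

/-- `prop T`: the number of proper edges of `T`. -/
def propCount (t : LTree) : ℕ := (properEdges t).length

/-- The number of edges of `T`. -/
def edgeCount (t : LTree) : ℕ := (edgeList t).length

/-- `T` is a labeled plane tree with `n` edges: its `n + 1` vertices are labeled
bijectively with `{1, 2, …, n + 1}`. -/
def IsLPT (n : ℕ) (t : LTree) : Prop := (labels t).Perm (List.range' 1 (n + 1))

/-- `T` is increasing: vertex labels increase along every path from the root. -/
inductive Increasing : LTree → Prop where
  | node (a : ℕ) (cs : List LTree) :
      (∀ c ∈ cs, a < rootLabel c) → (∀ c ∈ cs, Increasing c) → Increasing (node a cs)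

lemma le_foldr_min_iff {α : Type*} [LinearOrder α] {a b : α} {l : List α} :
    a ≤ l.foldr min b ↔ a ≤ b ∧ ∀ x ∈ l, a ≤ x := by
  induction l with
  | nil => simp
  | cons y ys ih => simp [ih, and_left_comm]

lemma labels_node (a : ℕ) (cs : List LTree) : labels (node a cs) = a :: labelsList cs := rfl

lemma labelsList_eq_flatten (cs : List LTree) : labelsList cs = (cs.map labels).flatten := by
  induction cs with
  | nil => rfl
  | cons c rest ih => simp [labelsList, ih]

lemma rootLabel_mem_labels (t : LTree) : rootLabel t ∈ labels t := by
  cases t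
  simp [rootLabel, labels]

lemma le_minLabel_iff {a : ℕ} {t : LTree} : a ≤ minLabel t ↔ ∀ x ∈ labels t, a ≤ x := by
  rw [minLabel, le_foldr_min_iff]
  exact ⟨And.right, fun h => ⟨h _ (rootLabel_mem_labels t), h⟩⟩

lemma minOver_eq_self {j : ℕ} {rest : List LTree} (h : ∀ c ∈ rest, j ≤ minLabel c) :
    minOver j rest = j :=
  le_antisymm (le_foldr_min_iff.1 le_rfl).1 (le_foldr_min_iff.2 ⟨le_rfl, by simpa using h⟩)

/-- Scanning the children from right to left, the running minimum `minOver j rest` stays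
equal to `j` exactly as long as no improper edge has been met. -/
lemma improperEdgesAux_eq_nil_iff {j : ℕ} {cs : List LTree} :
    improperEdgesAux j cs = [] ↔ ∀ c ∈ cs, j ≤ minLabel c ∧ improperEdges c = [] := by
  induction cs with
  | nil => simp [improperEdgesAux]
  | cons c rest ih =>
    rw [improperEdgesAux, List.forall_mem_cons, ← ih]
    constructor
    · intro h
      simp only [List.append_eq_nil_iff] at h
      obtain ⟨⟨hc, hsub⟩, hrest⟩ := h
      rw [minOver_eq_self fun c' hc' => (ih.1 hrest c' hc').1] at hc
      refine ⟨⟨?_, hsub⟩, hrest⟩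
      simpa using hc
    · rintro ⟨⟨hc, hsub⟩, hrest⟩
      rw [minOver_eq_self fun c' hc' => (ih.1 hrest c' hc').1, if_neg hc.not_gt, hsub, hrest]
      rfl

lemma Increasing.rootLabel_le {t : LTree} (h : Increasing t) {x : ℕ} (hx : x ∈ labels t) :
    rootLabel t ≤ x := by
  induction h with
  | node a cs hlt _ ih =>
    rw [labels_node, List.mem_cons, labelsList_eq_flatten] at hx
    obtain rfl | hx := hx
    · exact le_rfl
    · obtain ⟨c, hc, hxc⟩ := by simpa using hx
      exact (hlt c hc).le.trans (ih c hc hxc)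

lemma Increasing.improperEdges_eq_nil {t : LTree} (h : Increasing t) : improperEdges t = [] := by
  induction h with
  | node a cs hlt hinc ih =>
    exact improperEdgesAux_eq_nil_iff.2 fun c hc =>
      ⟨le_minLabel_iff.2 fun _ hx => (hlt c hc).le.trans ((hinc c hc).rootLabel_le hx), ih c hc⟩

/-- Distinct labels upgrade `j ≤ β(c)` to `j < rootLabel c`. -/
theorem increasing_of_improperEdges_eq_nil :
    ∀ t : LTree, (labels t).Nodup → improperEdges t = [] → Increasing t
  | node a cs, hnd, himp => by
    rw [labels_node, List.nodup_cons, labelsList_eq_flatten, List.nodup_flatten] at hnd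
    obtain ⟨ha, hcs, -⟩ := hnd
    have hchild := improperEdgesAux_eq_nil_iff.1 himp
    refine .node a cs (fun c hc => lt_of_le_of_ne ?_ ?_) fun c hc =>
      increasing_of_improperEdges_eq_nil c (hcs _ (List.mem_map_of_mem hc)) (hchild c hc).2
    · exact le_minLabel_iff.1 (hchild c hc).1 _ (rootLabel_mem_labels c)
    · rintro rfl
      exact ha (List.mem_flatten_of_mem (List.mem_map_of_mem hc) (rootLabel_mem_labels c))

end LTree

/-- A labeled plane tree `T` has no improper edges if and only if `T` is an
increasing plane tree. -/
theorem no_improper_iff_increasing (n : ℕ) (T : LTree) (hT : LTree.IsLPT n T) :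
    LTree.impr T = 0 ↔ LTree.Increasing T := by
  rw [LTree.impr, List.length_eq_zero_iff]
  exact ⟨LTree.increasing_of_improperEdges_eq_nil T (hT.nodup_iff.2 (List.nodup_range' 1 one_pos)),
    LTree.Increasing.improperEdges_eq_nil⟩
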